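/- arXiv:1209.2353 — 2 statements merged into one kernel-verified Lean document; each statement's English description precedes it below -/
import Mathlib

section
/- Define the weight of a permutation π ∈ S_n as weight(π) := q^{N_{[1,2,3]}(π)} · Π_{i=1}^n x_i^{c_i(π)}, where c_i(π) = |{(a,b) : 1 ≤ a < b ≤ n, π_a = i < π_b}|, and let P_n(q; x_1,...,x_n) := Σ_{π ∈ S_n} weight(π). Then P_n satisfies the Noonan–Zeilberger functional equation P_n(q; x_1,...,x_n) = Σ_{i=1}^n x_i^{n-i} · P_{n-1}(q; x_1,...,x_{i-1}, q·x_{i+1},..., q·x_n). -/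
/-!
Every permutation of `Fin (n + 1)` is `prependPerm p e` for a unique first value `p` and a unique
`e : Perm (Fin n)`. For `π = prependPerm p e` we have `c π p = n - p` and
`c π (p.succAbove j) = c e j`, while the 123-occurrences of `π` are those of `e` together with the
ones starting at position `0`; the latter are the 12-occurrences of `e` whose smaller value `j`
satisfies `p ≤ j`, so there are `∑_{j ≥ p} c e j` of them. Hence the weight of `π` is `x_p ^ (n - p)`
times the weight of `e` with `x_j` replaced by `q * x_{j+1}` exactly for `j ≥ p`.
-/

open Finset

/-- Number of occurrences of the increasing pattern [1,2,3] in `π`. -/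
def N3 {n : ℕ} (π : Equiv.Perm (Fin n)) : ℕ :=
  (Finset.univ.filter fun t : Fin n × Fin n × Fin n =>
    t.1 < t.2.1 ∧ t.2.1 < t.2.2 ∧ π t.1 < π t.2.1 ∧ π t.2.1 < π t.2.2).card

/-- `c π i` = number of pairs a < b with π(a) = i < π(b). -/
def c {n : ℕ} (π : Equiv.Perm (Fin n)) (i : Fin n) : ℕ :=
  (Finset.univ.filter fun p : Fin n × Fin n => p.1 < p.2 ∧ π p.1 = i ∧ i < π p.2).card

/-- The weight enumerator P_n(q; x_1,...,x_n) = Σ_π q^{N_{123}(π)} Π_i x_i^{c_i(π)}. -/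
noncomputable def P (n : ℕ) (q : ℝ) (x : Fin n → ℝ) : ℝ :=
  ∑ π : Equiv.Perm (Fin n), q ^ N3 π * ∏ i, x i ^ c π i

/-- The permutation with one-line notation `p, p.succAbove (e 0), …, p.succAbove (e (n - 1))`. -/
def prependPerm {n : ℕ} (p : Fin (n + 1)) (e : Equiv.Perm (Fin n)) : Equiv.Perm (Fin (n + 1)) :=
  (finSuccEquiv n).trans ((Equiv.optionCongr e).trans (finSuccEquiv' p).symm)

section

variable {n : ℕ}

@[simp]
lemma prependPerm_zero (p : Fin (n + 1)) (e : Equiv.Perm (Fin n)) : prependPerm p e 0 = p := by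
  simp [prependPerm]

@[simp]
lemma prependPerm_succ (p : Fin (n + 1)) (e : Equiv.Perm (Fin n)) (k : Fin n) :
    prependPerm p e k.succ = p.succAbove (e k) := by
  simp [prependPerm]

lemma prependPerm_injective :
    Function.Injective fun pe : Fin (n + 1) × Equiv.Perm (Fin n) => prependPerm pe.1 pe.2 := by
  rintro ⟨p, e⟩ ⟨p', e'⟩ h
  obtain rfl : p = p' := by simpa using DFunLike.congr_fun h 0
  obtain rfl : e = e' := Equiv.ext fun k =>
    (Fin.succAbove_right_injective (p := p)) (by simpa using DFunLike.congr_fun h k.succ)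
  rfl

lemma prependPerm_bijective :
    Function.Bijective fun pe : Fin (n + 1) × Equiv.Perm (Fin n) => prependPerm pe.1 pe.2 :=
  (Fintype.bijective_iff_injective_and_card _).2
    ⟨prependPerm_injective, by simp [Fintype.card_perm, Nat.factorial_succ]⟩

lemma sum_perm_succ {M : Type*} [AddCommMonoid M] (f : Equiv.Perm (Fin (n + 1)) → M) :
    ∑ π, f π = ∑ p, ∑ e, f (prependPerm p e) := by
  rw [← Fintype.sum_prod_type']
  exact (Fintype.sum_bijective _ prependPerm_bijective _ _ fun _ => rfl).symm

lemma c_apply_zero (π : Equiv.Perm (Fin (n + 1))) : c π (π 0) = n - π 0 := by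
  have hcount : c π (π 0) = ∑ b, if π 0 < π b then 1 else 0 := by
    simp only [c, card_filter, Fintype.sum_prod_type, Fin.sum_univ_succ]
    simp
  rw [hcount, Equiv.sum_comp π (fun v => if π 0 < v then 1 else 0), ← card_filter,
    filter_lt_eq_Ioi, Fin.card_Ioi]
  rfl

lemma sum_c_eq_card (σ : Equiv.Perm (Fin n)) (s : Finset (Fin n)) :
    ∑ j ∈ s, c σ j = #{t : Fin n × Fin n | t.1 < t.2 ∧ σ t.1 ∈ s ∧ σ t.1 < σ t.2} := by
  rw [card_eq_sum_card_fiberwise (f := fun t => σ t.1) (t := s)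
    fun t ht => (mem_filter.mp ht).2.2.1]
  refine sum_congr rfl fun j hj => ?_
  rw [c, filter_filter]
  refine congrArg card (filter_congr fun t _ => ?_)
  constructor
  · rintro ⟨hlt, rfl, hlt'⟩
    exact ⟨⟨hlt, hj, hlt'⟩, rfl⟩
  · rintro ⟨⟨hlt, -, hlt'⟩, rfl⟩
    exact ⟨hlt, rfl, hlt'⟩

lemma c_prependPerm_succAbove (p : Fin (n + 1)) (e : Equiv.Perm (Fin n)) (j : Fin n) :
    c (prependPerm p e) (p.succAbove j) = c e j := by
  simp only [c, card_filter, Fintype.sum_prod_type, Fin.sum_univ_succ, prependPerm_zero,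
    prependPerm_succ]
  simp [Fin.succAbove_lt_succAbove_iff]

lemma N3_prependPerm (p : Fin (n + 1)) (e : Equiv.Perm (Fin n)) :
    N3 (prependPerm p e) = N3 e + ∑ j with (p : ℕ) ≤ (j : Fin n), c e j := by
  rw [sum_c_eq_card]
  simp only [N3, card_filter, Fintype.sum_prod_type, Fin.sum_univ_succ, prependPerm_zero,
    prependPerm_succ]
  simp [Fin.succAbove_lt_succAbove_iff, Fin.lt_succAbove_iff_le_castSucc, Fin.le_def]
  ring

lemma prod_ite_castSucc_succ_pow {R : Type*} [CommMonoid R] (p : Fin (n + 1)) (q : R)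
    (x : Fin (n + 1) → R) (k : Fin n → ℕ) :
    ∏ j : Fin n, (if (j : ℕ) < p then x j.castSucc else q * x j.succ) ^ k j =
      q ^ (∑ j with (p : ℕ) ≤ (j : Fin n), k j) * ∏ j, x (p.succAbove j) ^ k j := by
  have hsplit (j : Fin n) : (if (j : ℕ) < p then x j.castSucc else q * x j.succ) ^ k j =
      q ^ (if (p : ℕ) ≤ j then k j else 0) * x (p.succAbove j) ^ k j := by
    by_cases h : (j : ℕ) < p
    · rw [if_pos h, if_neg (not_le.2 h), pow_zero, one_mul, Fin.succAbove_of_castSucc_lt _ _ h]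
    · rw [if_neg h, if_pos (not_lt.1 h), mul_pow, Fin.succAbove_of_le_castSucc _ _ (not_lt.1 h)]
  rw [prod_congr rfl fun j _ => hsplit j, prod_mul_distrib, prod_pow_eq_pow_sum, sum_filter]

lemma weight_prependPerm {R : Type*} [CommMonoid R] (p : Fin (n + 1))
    (e : Equiv.Perm (Fin n)) (q : R) (x : Fin (n + 1) → R) :
    q ^ N3 (prependPerm p e) * ∏ i, x i ^ c (prependPerm p e) i =
      x p ^ (n - p) * (q ^ N3 e *
        ∏ j : Fin n, (if (j : ℕ) < p then x j.castSucc else q * x j.succ) ^ c e j) := by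
  have hc : c (prependPerm p e) p = n - p := by simpa using c_apply_zero (prependPerm p e)
  rw [Fin.prod_univ_succAbove _ p, hc, N3_prependPerm, prod_ite_castSucc_succ_pow]
  simp only [c_prependPerm_succAbove, pow_add]
  ac_rfl

end

theorem noonan_zeilberger_functional_equation (n : ℕ) (q : ℝ) (x : Fin (n + 1) → ℝ) :
    P (n + 1) q x =
      ∑ i : Fin (n + 1), x i ^ (n - (i : ℕ)) *
        P n q (fun j : Fin n =>
          if (j : ℕ) < (i : ℕ) then x j.castSucc else q * x j.succ) := by
  simp only [P, mul_sum]
  rw [sum_perm_succ]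
  exact sum_congr rfl fun p _ => sum_congr rfl fun e _ => weight_prependPerm p e q x
end

section
/- The number of permutations of {1,...,n} containing no occurrence of the pattern [1,2,3] (i.e., no increasing subsequence of length 3) equals the Catalan number 2·(2n−1)!/((n−1)!·(n+1)!) = C(2n,n)/(n+1). -/
open Finset

lemma succAbove_val {m : ℕ} (p : Fin (m+1)) (i : Fin m) :
    ((p.succAbove i : Fin (m+1)) : ℕ) = if (i:ℕ) < (p:ℕ) then (i:ℕ) else (i:ℕ)+1 := by
  rcases lt_or_ge (i.castSucc) p with h | h
  · rw [Fin.succAbove_of_castSucc_lt _ _ h]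
    rw [Fin.lt_def] at h; simp at h; simp [h]
  · rw [Fin.succAbove_of_le_castSucc _ _ h]
    have h' : (p:ℕ) ≤ (i:ℕ) := by simpa [Fin.le_def] using h
    rw [if_neg (by omega)]; simp

lemma lt_succAbove_iff' {m : ℕ} (p : Fin (m+1)) (i : Fin m) :
    p < p.succAbove i ↔ (p:ℕ) ≤ (i:ℕ) := by
  rw [Fin.lt_def, succAbove_val]
  split_ifs <;> omega

lemma N3_eq_zero_iff {n : ℕ} (π : Equiv.Perm (Fin n)) :
    N3 π = 0 ↔ ∀ a b c : Fin n, a < b → b < c → π a < π b → π b < π c → False := by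
  rw [N3, Finset.card_eq_zero, Finset.filter_eq_empty_iff]
  constructor
  · intro h a b c h1 h2 h3 h4
    exact h (Finset.mem_univ (a, b, c)) ⟨h1, h2, h3, h4⟩
  · rintro h ⟨a, b, c⟩ - ⟨h1, h2, h3, h4⟩
    exact h a b c h1 h2 h3 h4

def A (m j : ℕ) : Finset (Equiv.Perm (Fin m)) :=
  Finset.univ.filter fun π => N3 π = 0 ∧
    ∀ a b : Fin m, a < b → π a < π b → (π a : ℕ) < j

lemma mem_A_iff {m j : ℕ} (π : Equiv.Perm (Fin m)) :
    π ∈ A m j ↔ ((∀ a b c : Fin m, a < b → b < c → π a < π b → π b < π c → False) ∧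
      ∀ a b : Fin m, a < b → π a < π b → (π a : ℕ) < j) := by
  rw [A, Finset.mem_filter, N3_eq_zero_iff]
  simp

def ofPairFun {m : ℕ} (p : Fin (m+1)) (q : Equiv.Perm (Fin m)) : Fin (m+1) → Fin (m+1) :=
  Fin.cons p (fun x => p.succAbove (q x))

lemma ofPairFun_bij {m : ℕ} (p : Fin (m+1)) (q : Equiv.Perm (Fin m)) :
    Function.Bijective (ofPairFun p q) := by
  constructor
  · intro a b hab
    induction a using Fin.cases with
    | zero =>
      induction b using Fin.cases with
      | zero => rfl
      | succ y =>
        simp only [ofPairFun, Fin.cons_zero, Fin.cons_succ] at hab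
        exact absurd hab.symm (Fin.succAbove_ne p (q y))
    | succ x =>
      induction b using Fin.cases with
      | zero =>
        simp only [ofPairFun, Fin.cons_zero, Fin.cons_succ] at hab
        exact absurd hab (Fin.succAbove_ne p (q x))
      | succ y =>
        simp only [ofPairFun, Fin.cons_succ] at hab
        have h1 := Fin.succAbove_right_injective (p := p) hab
        rw [q.injective h1]
  · intro y
    by_cases hy : y = p
    · exact ⟨0, by simp [ofPairFun, hy]⟩
    · obtain ⟨z, hz⟩ := Fin.exists_succAbove_eq hy
      exact ⟨(q.symm z).succ, by simp [ofPairFun, hz]⟩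

noncomputable def ofPair {m : ℕ} (p : Fin (m+1)) (q : Equiv.Perm (Fin m)) : Equiv.Perm (Fin (m+1)) :=
  Equiv.ofBijective (ofPairFun p q) (ofPairFun_bij p q)

@[simp] lemma ofPair_zero {m : ℕ} (p : Fin (m+1)) (q : Equiv.Perm (Fin m)) :
    ofPair p q 0 = p := by
  simp [ofPair, Equiv.ofBijective, ofPairFun]

@[simp] lemma ofPair_succ {m : ℕ} (p : Fin (m+1)) (q : Equiv.Perm (Fin m)) (x : Fin m) :
    ofPair p q x.succ = p.succAbove (q x) := by
  simp [ofPair, Equiv.ofBijective, ofPairFun]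

lemma exists_ofPair {m : ℕ} (π : Equiv.Perm (Fin (m+1))) : ∃ q, ofPair (π 0) q = π := by
  have hne : ∀ x : Fin (m+1), x ≠ 0 ↔ π x ≠ π 0 := by
    intro x; constructor
    · intro h h'; exact h (π.injective h')
    · intro h h'; exact h (by rw [h'])
  refine ⟨(finSuccAboveEquiv (0 : Fin (m+1))).trans
    ((Equiv.subtypeEquiv π hne).trans (finSuccAboveEquiv (π 0)).symm), ?_⟩
  apply Equiv.ext
  intro a
  induction a using Fin.cases with
  | zero => simp
  | succ x =>
    rw [ofPair_succ]
    have h1 : (finSuccAboveEquiv (π 0)) ((finSuccAboveEquiv (0 : Fin (m+1))).trans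
        ((Equiv.subtypeEquiv π hne).trans (finSuccAboveEquiv (π 0)).symm) x)
        = ⟨π x.succ, by rw [← hne]; exact (Fin.succ_ne_zero x)⟩ := by
      simp [finSuccAboveEquiv_apply, Equiv.subtypeEquiv]
    have h2 := congrArg Subtype.val h1
    rw [finSuccAboveEquiv_apply] at h2
    exact h2

lemma ofPair_inj {m : ℕ} (p : Fin (m+1)) {q q' : Equiv.Perm (Fin m)}
    (h : ofPair p q = ofPair p q') : q = q' := by
  apply Equiv.ext
  intro x
  have := congrFun (congrArg (fun e : Equiv.Perm (Fin (m+1)) => (e : Fin (m+1) → Fin (m+1))) h) x.succ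
  simp only [ofPair_succ] at this
  exact Fin.succAbove_right_injective this

lemma ofPair_mem_iff {m j : ℕ} (p : Fin (m+1)) (q : Equiv.Perm (Fin m)) :
    ofPair p q ∈ A (m+1) j ↔
      ((p = Fin.last m ∧ q ∈ A m j) ∨
       (p ≠ Fin.last m ∧ (p:ℕ) < j ∧ q ∈ A m (p:ℕ))) := by
  set π := ofPair p q with hπ
  have H1 : ∀ x y : Fin m, π x.succ < π y.succ ↔ q x < q y := by
    intro x y; rw [hπ, ofPair_succ, ofPair_succ]; exact Fin.succAbove_lt_succAbove_iff
  have H2 : ∀ x : Fin m, (π x.succ : ℕ) =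
      if ((q x):ℕ) < (p:ℕ) then ((q x):ℕ) else ((q x):ℕ)+1 := by
    intro x; rw [hπ, ofPair_succ]; exact succAbove_val p (q x)
  have H3 : ∀ x : Fin m, p < π x.succ ↔ (p:ℕ) ≤ ((q x):ℕ) := by
    intro x; rw [hπ, ofPair_succ]; exact lt_succAbove_iff' p (q x)
  rw [mem_A_iff, mem_A_iff, mem_A_iff]
  constructor
  · rintro ⟨hN, hasc⟩
    by_cases hp : p = Fin.last m
    · left
      refine ⟨hp, ?_, ?_⟩
      · intro a b c h1 h2 h3 h4
        exact hN a.succ b.succ c.succ (by simpa using h1) (by simpa using h2)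
          ((H1 a b).2 h3) ((H1 b c).2 h4)
      · intro a b h1 h2
        have h3 := hasc a.succ b.succ (by simpa using h1) ((H1 a b).2 h2)
        have h4 : ((q a):ℕ) < (p:ℕ) := by rw [hp]; simpa using (q a).isLt
        rw [H2 a, if_pos h4] at h3
        exact h3
    · right
      have hplt : (p:ℕ) < m := by
        rcases Nat.lt_or_ge (p:ℕ) m with h | h
        · exact h
        · exfalso; apply hp; apply Fin.ext
          have := p.isLt
          simp only [Fin.val_last]; omega
      refine ⟨hp, ?_, ?_, ?_⟩
      · -- p < j
        set x0 := q.symm ⟨(p:ℕ), hplt⟩ with hx0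
        have hq : ((q x0):ℕ) = (p:ℕ) := by rw [hx0]; simp
        have : p < π x0.succ := (H3 x0).2 (le_of_eq hq.symm)
        have h5 := hasc 0 x0.succ (Fin.succ_pos x0) (by rwa [hπ, ofPair_zero])
        rwa [hπ, ofPair_zero] at h5
      · intro a b c h1 h2 h3 h4
        exact hN a.succ b.succ c.succ (by simpa using h1) (by simpa using h2)
          ((H1 a b).2 h3) ((H1 b c).2 h4)
      · intro a b h1 h2
        by_contra hcon
        have h3 : p < π a.succ := (H3 a).2 (by omega)
        exact hN 0 a.succ b.succ (Fin.succ_pos a) (by simpa using h1)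
          (by rwa [hπ, ofPair_zero]) ((H1 a b).2 h2)
  · intro hyp
    rcases hyp with ⟨hp, hN, hasc⟩ | ⟨hp, hpj, hN, hasc⟩
    · constructor
      · intro a b c h1 h2 h3 h4
        rcases Fin.eq_zero_or_eq_succ a with rfl | ⟨x, rfl⟩
        · -- π 0 = last, can't be < π b
          rw [hπ, ofPair_zero, hp] at h3
          exact absurd h3 (Fin.not_lt.2 (Fin.le_last _))
        rcases Fin.eq_zero_or_eq_succ b with rfl | ⟨y, rfl⟩
        · exact absurd h1 (by simp)
        rcases Fin.eq_zero_or_eq_succ c with rfl | ⟨z, rfl⟩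
        · exact absurd h2 (by simp)
        exact hN x y z (by simpa using h1) (by simpa using h2) ((H1 x y).1 h3) ((H1 y z).1 h4)
      · intro a b h1 h2
        rcases Fin.eq_zero_or_eq_succ a with rfl | ⟨x, rfl⟩
        · rw [hπ, ofPair_zero, hp] at h2
          exact absurd h2 (Fin.not_lt.2 (Fin.le_last _))
        rcases Fin.eq_zero_or_eq_succ b with rfl | ⟨y, rfl⟩
        · exact absurd h1 (by simp)
        have h3 := hasc x y (by simpa using h1) ((H1 x y).1 h2)
        have h4 : ((q x):ℕ) < (p:ℕ) := by
          rw [hp]; simpa using (q x).isLt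
        rw [H2 x, if_pos h4]
        exact h3
    · constructor
      · intro a b c h1 h2 h3 h4
        rcases Fin.eq_zero_or_eq_succ b with rfl | ⟨y, rfl⟩
        · exact absurd h1 (Fin.not_lt.2 (Fin.zero_le a))
        rcases Fin.eq_zero_or_eq_succ c with rfl | ⟨z, rfl⟩
        · exact absurd h2 (Fin.not_lt.2 (Fin.zero_le _))
        rcases Fin.eq_zero_or_eq_succ a with rfl | ⟨x, rfl⟩
        · rw [hπ, ofPair_zero] at h3
          have h5 : (p:ℕ) ≤ ((q y):ℕ) := (H3 y).1 h3
          have h6 := hasc y z (by simpa using h2) ((H1 y z).1 h4)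
          omega
        · exact hN x y z (by simpa using h1) (by simpa using h2) ((H1 x y).1 h3) ((H1 y z).1 h4)
      · intro a b h1 h2
        rcases Fin.eq_zero_or_eq_succ a with rfl | ⟨x, rfl⟩
        · rwa [hπ, ofPair_zero]
        rcases Fin.eq_zero_or_eq_succ b with rfl | ⟨y, rfl⟩
        · exact absurd h1 (by simp)
        have h3 := hasc x y (by simpa using h1) ((H1 x y).1 h2)
        rw [H2 x, if_pos h3]
        omega

def b : ℕ → ℕ → ℕ
  | 0, _ => 1
  | (m+1), j => (∑ u ∈ Finset.range (min j m), b m u) + b m (min j m)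

lemma b_zero (m : ℕ) : b m 0 = 1 := by
  induction m with
  | zero => simp [b]
  | succ m ih => simp [b, ih]

lemma b_def (m j : ℕ) : b (m+1) j = (∑ u ∈ Finset.range (min j m), b m u) + b m (min j m) := rfl

lemma b_sat (m j : ℕ) (h : m ≤ j) : b m j = b m m := by
  cases m with
  | zero => simp [b]
  | succ m => rw [b_def, b_def, min_eq_right (by omega), min_eq_right (by omega)]

lemma b_succ_of_le (m j : ℕ) (h : j + 1 ≤ m) : b (m+1) (j+1) = b (m+1) j + b m (j+1) := by
  rw [b_def, b_def, min_eq_left h, min_eq_left (by omega), Finset.sum_range_succ]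

lemma b_last (m : ℕ) : b (m+1) (m+1) = b (m+1) m := by
  rw [b_def, b_def, min_eq_right (by omega), min_self]

lemma choose_pascal (N k : ℕ) : (N+1).choose (k+1) = N.choose k + N.choose (k+1) :=
  Nat.choose_succ_succ N k

lemma b_choose : ∀ m, ∀ j ≤ m, b m j + (m+j).choose (m+1) = (m+j).choose j := by
  intro m
  induction m with
  | zero =>
    intro j hj
    interval_cases j
    simp [b]
  | succ m ih =>
    intro j hj
    induction j with
    | zero =>
      rw [b_zero, Nat.choose_eq_zero_of_lt (by omega)]
      simp
    | succ j ihj =>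
      have h1 := ihj (by omega)
      rw [show m+1+j = m+j+1 from by omega] at h1
      rw [show m+1+(j+1) = (m+j+1)+1 from by omega]
      rw [choose_pascal (m+j+1) (m+1), choose_pascal (m+j+1) j]
      rcases Nat.lt_or_ge j m with hlt | hge
      · have h2 := ih (j+1) (by omega)
        rw [show m+(j+1) = m+j+1 from by omega] at h2
        rw [b_succ_of_le m j (by omega)]
        omega
      · have hjm : j = m := by omega
        subst hjm
        rw [b_last]
        omega

lemma card_fiber {m j : ℕ} (p : Fin (m+1)) :
    ((A (m+1) j).filter (fun π => π 0 = p)).card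
      = if p = Fin.last m then (A m j).card
        else (if (p:ℕ) < j then (A m (p:ℕ)).card else 0) := by
  split_ifs with h1 h2
  · subst h1
    refine (Finset.card_bij (fun q _ => ofPair (Fin.last m) q) ?_ ?_ ?_).symm
    · intro q hq
      rw [Finset.mem_filter]
      exact ⟨(ofPair_mem_iff _ q).2 (Or.inl ⟨rfl, hq⟩), ofPair_zero _ q⟩
    · intro q _ q' _ h
      exact ofPair_inj _ h
    · intro π hπ
      rw [Finset.mem_filter] at hπ
      obtain ⟨hmem, h0⟩ := hπ
      obtain ⟨q, hq⟩ := exists_ofPair π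
      rw [h0] at hq
      rw [← hq] at hmem
      rcases (ofPair_mem_iff _ q).1 hmem with ⟨-, hqA⟩ | ⟨hne, -⟩
      · exact ⟨q, hqA, hq⟩
      · exact absurd rfl hne
  · refine (Finset.card_bij (fun q _ => ofPair p q) ?_ ?_ ?_).symm
    · intro q hq
      rw [Finset.mem_filter]
      exact ⟨(ofPair_mem_iff p q).2 (Or.inr ⟨h1, h2, hq⟩), ofPair_zero p q⟩
    · intro q _ q' _ h
      exact ofPair_inj _ h
    · intro π hπ
      rw [Finset.mem_filter] at hπ
      obtain ⟨hmem, h0⟩ := hπ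
      obtain ⟨q, hq⟩ := exists_ofPair π
      rw [h0] at hq
      rw [← hq] at hmem
      rcases (ofPair_mem_iff _ q).1 hmem with ⟨hlast, -⟩ | ⟨-, -, hqA⟩
      · exact absurd hlast h1
      · exact ⟨q, hqA, hq⟩
  · rw [Finset.card_eq_zero, Finset.filter_eq_empty_iff]
    intro π hmem
    intro h0
    obtain ⟨q, hq⟩ := exists_ofPair π
    rw [h0] at hq
    rw [← hq] at hmem
    rcases (ofPair_mem_iff _ q).1 hmem with ⟨hlast, -⟩ | ⟨-, hlt, -⟩
    · exact h1 hlast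
    · exact h2 hlt

lemma cardA : ∀ m j, (A m j).card = b m j := by
  intro m
  induction m with
  | zero =>
    intro j
    have hA : A 0 j = Finset.univ := by
      ext π
      simp only [mem_A_iff, Finset.mem_univ, iff_true]
      exact ⟨fun a => a.elim0, fun a => a.elim0⟩
    rw [hA]
    simp [b, Finset.card_univ]
  | succ m ih =>
    intro j
    rw [Finset.card_eq_sum_card_fiberwise
      (f := fun π : Equiv.Perm (Fin (m+1)) => π 0) (t := Finset.univ)
      (fun π _ => Finset.mem_univ _)]
    have hfib : ∀ p : Fin (m+1), ((A (m+1) j).filter (fun π => π 0 = p)).card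
        = if p = Fin.last m then b m j
          else (if (p:ℕ) < j then b m (p:ℕ) else 0) := by
      intro p
      rw [card_fiber p, ih j]
      split_ifs <;> first | rfl | rw [ih]
    rw [Finset.sum_congr rfl (fun p _ => hfib p)]
    rw [Fin.sum_univ_castSucc]
    have hlast : (if (Fin.last m) = Fin.last m then b m j
        else (if ((Fin.last m : Fin (m+1)):ℕ) < j then b m ((Fin.last m : Fin (m+1)):ℕ) else 0)) = b m j := by
      simp
    rw [hlast]
    have hcs : ∀ i : Fin m, (if (Fin.castSucc i) = Fin.last m then b m j
        else (if ((Fin.castSucc i : Fin (m+1)):ℕ) < j then b m ((Fin.castSucc i : Fin (m+1)):ℕ) else 0))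
        = if (i:ℕ) < j then b m (i:ℕ) else 0 := by
      intro i
      rw [if_neg (Fin.ne_of_lt (Fin.castSucc_lt_last i))]
      simp
    rw [Finset.sum_congr rfl (fun i _ => hcs i)]
    rw [Fin.sum_univ_eq_sum_range (fun u => if u < j then b m u else 0) m]
    have hr : Finset.range (min j m) = (Finset.range m).filter (· < j) := by
      ext u
      simp only [Finset.mem_range, Finset.mem_filter]
      omega
    rw [b_def, hr, ← Finset.sum_filter]
    have hbm : b m (min j m) = b m j := by
      rcases Nat.le_total j m with h | h
      · rw [min_eq_left h]
      · rw [min_eq_right h, b_sat m j h]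
    rw [hbm]

theorem avoid_123_catalan (n : ℕ) (hn : 1 ≤ n) :
    (Finset.univ.filter fun π : Equiv.Perm (Fin n) => N3 π = 0).card *
        ((n - 1).factorial * (n + 1).factorial) = 2 * (2 * n - 1).factorial ∧
    (Finset.univ.filter fun π : Equiv.Perm (Fin n) => N3 π = 0).card * (n + 1) =
      Nat.choose (2 * n) n := by
  have hAset : (Finset.univ.filter fun π : Equiv.Perm (Fin n) => N3 π = 0) = A n n := by
    ext π
    simp only [Finset.mem_filter, Finset.mem_univ, true_and, mem_A_iff, N3_eq_zero_iff]
    constructor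
    · intro h
      exact ⟨h, fun a b _ _ => (π a).isLt⟩
    · intro h
      exact h.1
  set f := (Finset.univ.filter fun π : Equiv.Perm (Fin n) => N3 π = 0).card with hfdef
  have hf : f + (2*n).choose (n+1) = (2*n).choose n := by
    rw [hfdef, hAset, cardA n n]
    have := b_choose n n le_rfl
    rw [show n + n = 2*n from by omega] at this
    exact this
  obtain ⟨k, rfl⟩ : ∃ k, n = k + 1 := ⟨n - 1, by omega⟩
  set C := (2*(k+1)).choose (k+1) with hC
  -- part 2
  have h3 : (2*(k+1)).choose (k+1+1) * (k+1+1) = C * (k+1) := by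
    have h := Nat.choose_succ_right_eq (2*(k+1)) (k+1)
    rw [show 2*(k+1) - (k+1) = k+1 from by omega] at h
    exact h
  have part2 : f * (k+1+1) = C := by
    have h2 : f * (k+1+1) + (2*(k+1)).choose (k+1+1) * (k+1+1) = C * (k+1+1) := by
      rw [← Nat.add_mul, hf]
    rw [h3] at h2
    have h4 : C * (k+1+1) = C * (k+1) + C := by ring
    omega
  refine ⟨?_, part2⟩
  -- part 1
  have hCfac : C * ((k+1).factorial * (k+1).factorial) = (2*(k+1)).factorial := by
    have h := Nat.choose_mul_factorial_mul_factorial (show k+1 ≤ 2*(k+1) by omega)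
    rw [show 2*(k+1) - (k+1) = k+1 from by omega] at h
    rw [← Nat.mul_assoc]
    exact h
  have e2 : (k+1+1).factorial = (k+1+1) * (k+1).factorial := Nat.factorial_succ (k+1)
  have e1 : (k+1).factorial = (k+1) * k.factorial := Nat.factorial_succ k
  have e3 : (2*(k+1)).factorial = (2*k+2) * (2*k+1).factorial := by
    rw [show 2*(k+1) = (2*k+1)+1 from by omega]
    exact Nat.factorial_succ _
  rw [show k+1-1 = k from by omega, show 2*(k+1)-1 = 2*k+1 from by omega]
  have key : f * (k.factorial * (k+1+1).factorial) * ((k+1)*(k+1+1))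
      = 2 * (2*k+1).factorial * ((k+1)*(k+1+1)) := by
    calc f * (k.factorial * (k+1+1).factorial) * ((k+1)*(k+1+1))
        = (f * (k+1+1)) * (((k+1) * k.factorial) * (k+1+1).factorial) := by ring
      _ = C * ((k+1).factorial * (k+1+1).factorial) := by rw [part2, ← e1]
      _ = C * ((k+1).factorial * (k+1).factorial) * (k+1+1) := by rw [e2]; ring
      _ = (2*(k+1)).factorial * (k+1+1) := by rw [hCfac]
      _ = 2 * (2*k+1).factorial * ((k+1)*(k+1+1)) := by rw [e3]; ring
  exact Nat.eq_of_mul_eq_mul_right (by positivity) key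
end
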